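/- Let S ≥ 2 and N ≥ 2 be integers. Then Σ_{k=1}^{N} C(N,k) · (g(S,k) + (S−1)·f(S,k)) = (S^N − 1)/(S − 1) = Σ_{i=0}^{N−1} S^{i}, where C(·,·) is the binomial coefficient. (Consequently the PIR scheme of Section 2 downloads 1 + S + ⋯ + S^{N−1} subfiles in total, achieving the optimal rate 1 + 1/S + ⋯ + 1/S^{N−1}.) -/

import Mathlib

/-- Pair `(g S k, f S k)` defined by the recurrence:
`g(S,1)=1, f(S,1)=0`, and for `k ≥ 2`,
`g(S,k)=(S−1)·f(S,k−1)`, `f(S,k)=(S−2)·f(S,k−1)+g(S,k−1)`. -/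
def gfAux (S : ℕ) : ℕ → ℤ × ℤ
  | 0 => (0, 0)
  | 1 => (1, 0)
  | (k+2) => (((S : ℤ) - 1) * (gfAux S (k+1)).2,
              ((S : ℤ) - 2) * (gfAux S (k+1)).2 + (gfAux S (k+1)).1)

def g (S k : ℕ) : ℤ := (gfAux S k).1
def f (S k : ℕ) : ℤ := (gfAux S k).2

/-- `φ_s(S,k)`: `g(S,k)` if `s = 1`, else `f(S,k)`. -/
def phi (S s k : ℕ) : ℤ := if s = 1 then g S k else f S k

/-- `ψ_s(S,k) = ⌈(k(N−1)/N)·φ_s(S,k)⌉`. -/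
def psi (S N s k : ℕ) : ℤ := ⌈((k : ℚ) * ((N : ℚ) - 1) / (N : ℚ)) * ((phi S s k : ℚ))⌉

/-- `q = Σ_{k=1}^{N} Σ_{s=1}^{S} C(N,k)·ψ_s(S,k)`. -/
def qTotal (S N : ℕ) : ℤ :=
  ∑ k ∈ Finset.Icc 1 N, ∑ s ∈ Finset.Icc 1 S, (N.choose k : ℤ) * psi S N s k

/-!
The number of queries about a fixed `k`-sum, `g(S,k) + (S-1) f(S,k)`, gets multiplied by `S - 1`
from one `k` to the next, so it equals `(S-1)^(k-1)`. The total is therefore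
`∑ C(N,k) x^(k-1)` with `x = S - 1`, and Pascal's rule identifies this with `∑_{i<N} (x+1)^i`.
-/

theorem sum_Icc_one_eq_sum_range_succ {M : Type*} [AddCommMonoid M] (F : ℕ → M) (n : ℕ) :
    ∑ k ∈ Finset.Icc 1 n, F k = ∑ k ∈ Finset.range n, F (k + 1) := by
  rw [Finset.range_eq_Ico, Finset.sum_Ico_add', zero_add, Finset.Ico_add_one_right_eq_Icc]

theorem sum_choose_succ_mul_pow {R : Type*} [CommSemiring R] (x : R) (n : ℕ) :
    ∑ k ∈ Finset.range n, (n.choose (k + 1) : R) * x ^ k = ∑ i ∈ Finset.range n, (x + 1) ^ i := by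
  induction n with
  | zero => simp
  | succ n ih =>
    have binomial : ∑ k ∈ Finset.range (n + 1), (n.choose k : R) * x ^ k = (x + 1) ^ n := by
      rw [add_pow]
      refine Finset.sum_congr rfl fun k _ => ?_
      rw [one_pow, mul_one, mul_comm]
    calc ∑ k ∈ Finset.range (n + 1), ((n + 1).choose (k + 1) : R) * x ^ k
        = ∑ k ∈ Finset.range (n + 1), (n.choose k : R) * x ^ k
          + ∑ k ∈ Finset.range (n + 1), (n.choose (k + 1) : R) * x ^ k := by
          rw [← Finset.sum_add_distrib]
          refine Finset.sum_congr rfl fun k _ => ?_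
          rw [Nat.choose_succ_succ', Nat.cast_add, add_mul]
      _ = (x + 1) ^ n + ∑ i ∈ Finset.range n, (x + 1) ^ i := by
          rw [binomial, Finset.sum_range_succ _ n, Nat.choose_succ_self, Nat.cast_zero, zero_mul,
            add_zero, ih]
      _ = ∑ i ∈ Finset.range (n + 1), (x + 1) ^ i := by rw [Finset.sum_range_succ, add_comm]

theorem g_add_sub_one_mul_f (S k : ℕ) :
    g S (k + 1) + ((S : ℤ) - 1) * f S (k + 1) = ((S : ℤ) - 1) ^ k := by
  induction k with
  | zero => simp [g, f, gfAux]
  | succ k ih =>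
    calc g S (k + 2) + ((S : ℤ) - 1) * f S (k + 2)
        = ((S : ℤ) - 1) * (g S (k + 1) + ((S : ℤ) - 1) * f S (k + 1)) := by
          simp only [g, f, gfAux]; ring
      _ = ((S : ℤ) - 1) ^ (k + 1) := by rw [ih, pow_succ']

theorem total_queries_pir_general (S N : ℕ) :
    (∑ k ∈ Finset.Icc 1 N, (N.choose k : ℤ) * (g S k + ((S : ℤ) - 1) * f S k)
      = ∑ i ∈ Finset.range N, (S : ℤ) ^ i) ∧
    (((S : ℤ) - 1) * ∑ i ∈ Finset.range N, (S : ℤ) ^ i = (S : ℤ) ^ N - 1) := by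
  constructor
  · simp only [sum_Icc_one_eq_sum_range_succ, g_add_sub_one_mul_f]
    rw [sum_choose_succ_mul_pow, sub_add_cancel]
  · rw [mul_comm, geom_sum_mul]

theorem total_queries_pir (S N : ℕ) (hS : 2 ≤ S) (hN : 2 ≤ N) :
    (∑ k ∈ Finset.Icc 1 N, (N.choose k : ℤ) * (g S k + ((S : ℤ) - 1) * f S k)
      = ∑ i ∈ Finset.range N, (S : ℤ) ^ i) ∧
    (((S : ℤ) - 1) * ∑ i ∈ Finset.range N, (S : ℤ) ^ i = (S : ℤ) ^ N - 1) :=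
  total_queries_pir_general S N
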